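/- Let $m > 2$ be prime and let $\Lambda \subset \mathbb{Z}^n$ be an orthogonal set of the finite convolution $\mu_k = \delta_{R_1^{-1}D_1} * \cdots * \delta_{(R_k\cdots R_1)^{-1}D_k}$ (indices reordered appropriately), where $R_i = \operatorname{diag}[p_{i,1},\dots,p_{i,n}]$ and each $\mathcal{Z}(m_{D_i}) \subset \bigcup_{l=1}^{m-1}\left(\frac{l}{m}\{1,\dots,m-1\}^n + \mathbb{Z}^n\right)$. If $m \nmid p_{k,j_0}$ for some $j_0$, and $U_{k-1} := R_1\cdots R_{k-1}\,\mathcal{Z}(m_{D_{k-1}})$, then $\#(\Lambda \cap U_{k-1}) < m$. -/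

import Mathlib

open MeasureTheory

/-- The canonical embedding `ℤⁿ → ℝⁿ`. -/
noncomputable def ιv {n : ℕ} (z : Fin n → ℤ) : EuclideanSpace ℝ (Fin n) :=
  WithLp.toLp 2 (fun t => (z t : ℝ))

/-!
Look at the single coordinate `j₀`. A point `ξ` of a Sierpinski-type zero set has
`m ξ_{j₀} = l v + m z` with `m ∤ l v`, so every `λ ∈ Λ ∩ U_{k-1}` satisfies
`m λ_{j₀} = P_{k-1} c(λ)` with `m ∤ c(λ)`, where `P_i = p_{1,j₀} ⋯ p_{i,j₀}`.
For `λ ≠ λ'` orthogonality gives `P_i e = P_{k-1} (c(λ) - c(λ'))` with `i ≤ k` and `m ∤ e`;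
cancelling, `c(λ) - c(λ')` is either a multiple of `e` (when `i < k`) or equals `p_{k,j₀} e`,
so `m ∤ c(λ) - c(λ')`. Hence `λ ↦ c(λ) mod m` injects `Λ ∩ U_{k-1}` into the `m - 1`
nonzero residues.
-/

open Finset

theorem Set.ncard_lt_of_pairwise_not_dvd_sub {α : Type*} {m : ℕ} [NeZero m] {S : Set α}
    (f : α → ℤ) (hf : ∀ x ∈ S, ¬ (m : ℤ) ∣ f x)
    (hpair : ∀ x ∈ S, ∀ y ∈ S, x ≠ y → ¬ (m : ℤ) ∣ f x - f y) :
    S.Finite ∧ S.ncard < m := by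
  set g : α → ZMod m := fun x => (f x : ZMod m)
  have hinj : Set.InjOn g S := fun x hx y hy hxy => by
    by_contra hne
    exact hpair x hx y hy hne ((ZMod.intCast_eq_intCast_iff_dvd_sub _ _ _).mp hxy.symm)
  have himg : g '' S ⊂ Set.univ := by
    refine Set.ssubset_univ_iff.mpr fun h => ?_
    obtain ⟨x, hx, hx0⟩ : (0 : ZMod m) ∈ g '' S := h ▸ Set.mem_univ _
    exact hf x hx ((ZMod.intCast_zmod_eq_zero_iff_dvd _ m).mp hx0)
  refine ⟨Set.Finite.of_finite_image (Set.toFinite _) hinj, ?_⟩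
  calc S.ncard = (g '' S).ncard := hinj.ncard_image.symm
    _ < (Set.univ : Set (ZMod m)).ncard := Set.ncard_lt_ncard himg (Set.toFinite _)
    _ = m := by rw [Set.ncard_univ, Nat.card_zmod]

theorem Prime.not_dvd_of_prod_Icc_mul_eq {q : ℕ → ℤ} {π e c : ℤ} {i k : ℕ} (hπ : Prime π)
    (hq : ∀ j ∈ Icc 1 k, q j ≠ 0) (hqk : ¬ π ∣ q (k + 1)) (hi : i ≤ k + 1) (he : ¬ π ∣ e)
    (h : (∏ j ∈ Icc 1 i, q j) * e = (∏ j ∈ Icc 1 k, q j) * c) : ¬ π ∣ c := by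
  intro hc
  rcases hi.lt_or_eq with hik | rfl
  · obtain ⟨r, hr⟩ : ∏ j ∈ Icc 1 i, q j ∣ ∏ j ∈ Icc 1 k, q j :=
      prod_dvd_prod_of_subset _ _ _ (Icc_subset_Icc_right (Nat.le_of_lt_succ hik))
    have hne : ∏ j ∈ Icc 1 i, q j ≠ 0 := prod_ne_zero_iff.mpr fun j hj =>
      hq j (Icc_subset_Icc_right (Nat.le_of_lt_succ hik) hj)
    have : e = r * c := mul_left_cancel₀ hne (by rw [h, hr, mul_assoc])
    exact he (this ▸ hc.mul_left r)
  · have hne : ∏ j ∈ Icc 1 k, q j ≠ 0 := prod_ne_zero_iff.mpr hq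
    rw [prod_Icc_succ_top (by omega), mul_assoc] at h
    rcases hπ.dvd_mul.mp (mul_left_cancel₀ hne h ▸ hc) with h' | h'
    exacts [hqk h', he h']

/-- The Sierpinski-type set `⋃_{l=1}^{m-1} (l/m) {1, …, m-1}ⁿ + ℤⁿ`. -/
def sierpinskiSet (n m : ℕ) : Set (EuclideanSpace ℝ (Fin n)) :=
  {ξ | ∃ l ∈ Icc 1 (m - 1), ∃ v : Fin n → ℤ, (∀ t, 1 ≤ v t ∧ v t ≤ (m : ℤ) - 1) ∧
    ∃ z : Fin n → ℤ, ξ = (WithLp.toLp 2 (fun t => (l : ℝ) / m * v t + z t))}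

/-- The integer points of `R₁ ⋯ Rᵢ Z`, for `Rⱼ = diag (p j)`. -/
def scaledIntPoints {n : ℕ} (p : ℕ → Fin n → ℤ) (i : ℕ) (Z : Set (EuclideanSpace ℝ (Fin n))) :
    Set (Fin n → ℤ) :=
  {d | ∃ ξ ∈ Z, ιv d = (WithLp.toLp 2 (fun t => (∏ j ∈ Icc 1 i, (p j t : ℝ)) * ξ t))}

theorem exists_mul_eq_intCast_of_mem_sierpinskiSet {n m : ℕ} (hm : m.Prime)
    {ξ : EuclideanSpace ℝ (Fin n)} (hξ : ξ ∈ sierpinskiSet n m) (t : Fin n) :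
    ∃ c : ℤ, (m : ℝ) * ξ t = c ∧ ¬ (m : ℤ) ∣ c := by
  obtain ⟨l, hl, v, hv, z, rfl⟩ := hξ
  have hmR : (m : ℝ) ≠ 0 := by exact_mod_cast hm.ne_zero
  refine ⟨l * v t + m * z t, by push_cast; field_simp, fun h => ?_⟩
  obtain ⟨hl1, hlm⟩ := mem_Icc.mp hl
  rw [dvd_add_left (dvd_mul_right (m : ℤ) (z t))] at h
  rcases (Nat.prime_iff_prime_int.mp hm).dvd_mul.mp h with h | h
  · have := Nat.le_of_dvd (by omega) (Int.ofNat_dvd.mp h)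
    omega
  · have := Int.le_of_dvd (by linarith [hv t]) h
    linarith [hv t]

theorem exists_prod_mul_eq_of_mem_scaledIntPoints {n m : ℕ} (hm : m.Prime)
    {p : ℕ → Fin n → ℤ} {i : ℕ} {Z : Set (EuclideanSpace ℝ (Fin n))} (hZ : Z ⊆ sierpinskiSet n m)
    {d : Fin n → ℤ} (hd : d ∈ scaledIntPoints p i Z) (t : Fin n) :
    ∃ c : ℤ, (∏ j ∈ Icc 1 i, p j t) * c = m * d t ∧ ¬ (m : ℤ) ∣ c := by
  obtain ⟨ξ, hξ, hdξ⟩ := hd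
  obtain ⟨c, hc, hmc⟩ := exists_mul_eq_intCast_of_mem_sierpinskiSet hm (hZ hξ) t
  refine ⟨c, ?_, hmc⟩
  have hdt : (d t : ℝ) = (∏ j ∈ Icc 1 i, (p j t : ℝ)) * ξ t := congrArg (· t) hdξ
  have : ((∏ j ∈ Icc 1 i, p j t : ℤ) : ℝ) * c = m * d t := by
    rw [hdt, ← hc]; push_cast; ring
  exact_mod_cast this

theorem stmt18_general {n : ℕ} (m k : ℕ) (hm : m.Prime) (hk : 2 ≤ k)
    (p : ℕ → Fin n → ℤ) (hexp : ∀ i ∈ Finset.Icc 1 k, ∀ t, 1 < |p i t|)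
    (Z : ℕ → Set (EuclideanSpace ℝ (Fin n)))
    (hZ : ∀ i ∈ Finset.Icc 1 k, Z i ⊆
        {ξ : EuclideanSpace ℝ (Fin n) | ∃ l ∈ Finset.Icc 1 (m - 1), ∃ v : Fin n → ℤ,
          (∀ t, 1 ≤ v t ∧ v t ≤ (m : ℤ) - 1) ∧ ∃ z : Fin n → ℤ,
            ξ = (WithLp.toLp 2 (fun t => (l : ℝ) / m * v t + z t) : EuclideanSpace ℝ (Fin n))})
    (Λ : Set (Fin n → ℤ))
    (horth : ∀ l ∈ Λ, ∀ l' ∈ Λ, l ≠ l' → ∃ i ∈ Finset.Icc 1 k, ∃ ξ ∈ Z i,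
        ιv (l - l') =
          (WithLp.toLp 2 (fun t => (∏ j ∈ Finset.Icc 1 i, (p j t : ℝ)) * ξ t) : EuclideanSpace ℝ (Fin n)))
    (j₀ : Fin n) (hdiv : ¬ (m : ℤ) ∣ p k j₀) :
    (Λ ∩ {l : Fin n → ℤ | ∃ ξ ∈ Z (k - 1),
        ιv l = (WithLp.toLp 2 (fun t => (∏ j ∈ Finset.Icc 1 (k - 1), (p j t : ℝ)) * ξ t) :
          EuclideanSpace ℝ (Fin n))}).Finite ∧
    (Λ ∩ {l : Fin n → ℤ | ∃ ξ ∈ Z (k - 1),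
        ιv l = (WithLp.toLp 2 (fun t => (∏ j ∈ Finset.Icc 1 (k - 1), (p j t : ℝ)) * ξ t) :
          EuclideanSpace ℝ (Fin n))}).ncard < m := by
  obtain ⟨k, rfl⟩ : ∃ k', k = k' + 1 := ⟨k - 1, by omega⟩
  simp only [Nat.add_sub_cancel]
  have : NeZero m := ⟨hm.ne_zero⟩
  have hp : ∀ j ∈ Icc 1 k, p j j₀ ≠ 0 := fun j hj h => by
    have := hexp j (Icc_subset_Icc_right k.le_succ hj) j₀
    simp [h] at this
  have hc : ∀ l ∈ Λ ∩ scaledIntPoints p k (Z k),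
      ∃ c : ℤ, (∏ j ∈ Icc 1 k, p j j₀) * c = m * l j₀ ∧ ¬ (m : ℤ) ∣ c := fun l hl =>
    exists_prod_mul_eq_of_mem_scaledIntPoints hm (hZ k (by simp; omega)) hl.2 j₀
  choose! c hc hmc using hc
  refine Set.ncard_lt_of_pairwise_not_dvd_sub c hmc fun l hl l' hl' hne => ?_
  obtain ⟨i, hi, hdiff⟩ := horth l hl.1 l' hl'.1 hne
  obtain ⟨e, he, hme⟩ := exists_prod_mul_eq_of_mem_scaledIntPoints hm (hZ i hi) hdiff j₀
  refine (Nat.prime_iff_prime_int.mp hm).not_dvd_of_prod_Icc_mul_eq hp hdiv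
    (mem_Icc.mp hi).2 hme ?_
  rw [he, Pi.sub_apply, mul_sub, mul_sub, ← hc l hl, ← hc l' hl']

/-- If `m > 2` is prime, `Λ ⊂ ℤⁿ` is an orthogonal set of the finite convolution `μ_k`
(`(Λ-Λ)\{0} ⊂ Z(μ̂_k) = ⋃_{i=1}^k R₁⋯Rᵢ Z(m_{D_i})`), each `Z(m_{D_i})` is of
Sierpinski type, and `m ∤ p_{k,j₀}`, then `#(Λ ∩ U_{k-1}) < m` where
`U_{k-1} = R₁⋯R_{k-1} Z(m_{D_{k-1}})`. -/
theorem stmt18 {n : ℕ} (m k : ℕ) (hm : m.Prime) (hm2 : 2 < m) (hk : 2 ≤ k)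
    (p : ℕ → Fin n → ℤ) (hexp : ∀ i ∈ Finset.Icc 1 k, ∀ t, 1 < |p i t|)
    (D : ℕ → Finset (Fin n → ℤ)) (hcard : ∀ i ∈ Finset.Icc 1 k, (D i).card = m)
    (Z : ℕ → Set (EuclideanSpace ℝ (Fin n)))
    (hZdef : ∀ i, Z i = {ξ : EuclideanSpace ℝ (Fin n) | ∑ d ∈ D i,
        Complex.exp (2 * (Real.pi : ℂ) * Complex.I * ((inner ℝ ξ (ιv d) : ℝ) : ℂ)) = 0})
    (hZ : ∀ i ∈ Finset.Icc 1 k, Z i ⊆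
        {ξ : EuclideanSpace ℝ (Fin n) | ∃ l ∈ Finset.Icc 1 (m - 1), ∃ v : Fin n → ℤ,
          (∀ t, 1 ≤ v t ∧ v t ≤ (m : ℤ) - 1) ∧ ∃ z : Fin n → ℤ,
            ξ = (WithLp.toLp 2 (fun t => (l : ℝ) / m * v t + z t) : EuclideanSpace ℝ (Fin n))})
    (Λ : Set (Fin n → ℤ))
    (horth : ∀ l ∈ Λ, ∀ l' ∈ Λ, l ≠ l' → ∃ i ∈ Finset.Icc 1 k, ∃ ξ ∈ Z i,
        ιv (l - l') =
          (WithLp.toLp 2 (fun t => (∏ j ∈ Finset.Icc 1 i, (p j t : ℝ)) * ξ t) : EuclideanSpace ℝ (Fin n)))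
    (j₀ : Fin n) (hdiv : ¬ (m : ℤ) ∣ p k j₀) :
    (Λ ∩ {l : Fin n → ℤ | ∃ ξ ∈ Z (k - 1),
        ιv l = (WithLp.toLp 2 (fun t => (∏ j ∈ Finset.Icc 1 (k - 1), (p j t : ℝ)) * ξ t) :
          EuclideanSpace ℝ (Fin n))}).Finite ∧
    (Λ ∩ {l : Fin n → ℤ | ∃ ξ ∈ Z (k - 1),
        ιv l = (WithLp.toLp 2 (fun t => (∏ j ∈ Finset.Icc 1 (k - 1), (p j t : ℝ)) * ξ t) :
          EuclideanSpace ℝ (Fin n))}).ncard < m :=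
  stmt18_general m k hm hk p hexp Z hZ Λ horth j₀ hdiv
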